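/- Let t : Fin k → EuclideanSpace ℝ (Fin n) be a tuple of points whose norms ‖t 1‖, …, ‖t k‖ are pairwise distinct (i.e., t is radially collision-free). If s : Fin k → EuclideanSpace ℝ (Fin n) is any tuple of pairwise distinct points having the same second-moment data as t, then there exist g ∈ O(n) and a permutation σ of Fin k such that s i = g (t (σ i)) for all i. In other words, the second moment over O(n) determines a δ-function with radially collision-free support uniquely up to an orthogonal transformation. -/

import Mathlib

open RealInnerProductSpace

/-- The pair data of a tuple: the set of all
`({‖s i‖, ‖s j‖} (unordered), ⟪s i, s j⟫)` over pairs `i < j`. -/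
def pairData {n k : ℕ} (s : Fin k → EuclideanSpace ℝ (Fin n)) : Set (Sym2 ℝ × ℝ) :=
  { p | ∃ i j : Fin k, i < j ∧ p = (Sym2.mk ‖s i‖ ‖s j‖, ⟪s i, s j⟫) }

/-- The norm data of a tuple: the multiset of norms `‖s i‖`, `i ∈ Fin k`. -/
noncomputable def normData {n k : ℕ} (s : Fin k → EuclideanSpace ℝ (Fin n)) : Multiset ℝ :=
  Finset.univ.val.map fun i => ‖s i‖

/-- Two tuples have the same second-moment data if their norm data (as multisets)
and their pair data (as sets) coincide. -/
def SameSecondMoment {n k : ℕ} (s t : Fin k → EuclideanSpace ℝ (Fin n)) : Prop :=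
  normData s = normData t ∧ pairData s = pairData t

/-- Two tuples with identical Gram matrices are related by a linear isometry equivalence. -/
lemma exists_isometry_of_gram {n k : ℕ} (u s : Fin k → EuclideanSpace ℝ (Fin n))
    (h : ∀ i j, ⟪s i, s j⟫ = ⟪u i, u j⟫) :
    ∃ g : EuclideanSpace ℝ (Fin n) ≃ₗᵢ[ℝ] EuclideanSpace ℝ (Fin n), ∀ i, s i = g (u i) := by
  classical
  let V := EuclideanSpace ℝ (Fin n)
  let T : (Fin k → V) → ((Fin k → ℝ) →ₗ[ℝ] V) := fun v =>
    { toFun := fun c => ∑ i, c i • v i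
      map_add' := fun a b => by simp [add_smul, Finset.sum_add_distrib]
      map_smul' := fun r a => by simp [Finset.smul_sum, smul_smul] }
  have hT : ∀ v c, T v c = ∑ i, c i • v i := fun _ _ => rfl
  have hTsingle : ∀ v (i : Fin k), T v (Pi.single i 1) = v i := by
    intro v i
    rw [hT]
    rw [Finset.sum_eq_single i]
    · simp
    · intro j _ hj; simp [Pi.single_apply, hj]
    · simp
  have hinner : ∀ c : Fin k → ℝ, ⟪T s c, T s c⟫ = ⟪T u c, T u c⟫ := by
    intro c
    simp only [hT, inner_sum (𝕜 := ℝ) (E := V), sum_inner (𝕜 := ℝ) (E := V), real_inner_smul_left, real_inner_smul_right]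
    exact Finset.sum_congr rfl fun i _ => Finset.sum_congr rfl fun j _ => by rw [h]
  have hnorm : ∀ c : Fin k → ℝ, ‖T s c‖ = ‖T u c‖ := by
    intro c
    have h2 : ‖T s c‖ ^ 2 = ‖T u c‖ ^ 2 := by
      rw [← real_inner_self_eq_norm_sq (F := V), ← real_inner_self_eq_norm_sq (F := V), hinner]
    have := congrArg Real.sqrt h2
    rwa [Real.sqrt_sq (norm_nonneg _), Real.sqrt_sq (norm_nonneg _)] at this
  have hker : LinearMap.ker (T u) = LinearMap.ker (T s) := by
    ext c
    simp only [LinearMap.mem_ker]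
    rw [← norm_eq_zero, ← norm_eq_zero (a := T s c), hnorm]
  let e_u := (T u).quotKerEquivRange
  let e_s := (T s).quotKerEquivRange
  let q := Submodule.quotEquivOfEq _ _ hker
  let φ : LinearMap.range (T u) →ₗ[ℝ] V :=
    (LinearMap.range (T s)).subtype ∘ₗ e_s.toLinearMap ∘ₗ q.toLinearMap ∘ₗ e_u.symm.toLinearMap
  have hφ : ∀ c : Fin k → ℝ,
      φ ⟨T u c, LinearMap.mem_range_self _ c⟩ = T s c := by
    intro c
    have h1 : e_u (Submodule.Quotient.mk c) = ⟨T u c, LinearMap.mem_range_self _ c⟩ :=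
      Subtype.ext ((T u).quotKerEquivRange_apply_mk c)
    have h2 : e_u.symm ⟨T u c, LinearMap.mem_range_self _ c⟩ = Submodule.Quotient.mk c := by
      rw [← h1, LinearEquiv.symm_apply_apply]
    simp only [φ, LinearMap.comp_apply, LinearEquiv.coe_coe, h2]
    rw [show q (Submodule.Quotient.mk c) = Submodule.Quotient.mk c from
      Submodule.quotEquivOfEq_mk _ _ hker c]
    rw [show e_s (Submodule.Quotient.mk c) = ⟨T s c, LinearMap.mem_range_self _ c⟩ from
      Subtype.ext ((T s).quotKerEquivRange_apply_mk c)]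
    rfl
  let F : (LinearMap.range (T u)) →ₗᵢ[ℝ] V :=
    { toLinearMap := φ
      norm_map' := by
        rintro ⟨x, c, rfl⟩
        rw [hφ c]
        exact (hnorm c).trans rfl }
  let G : V →ₗᵢ[ℝ] V := F.extend
  refine ⟨G.toLinearIsometryEquiv rfl, fun i => ?_⟩
  have hmem : u i ∈ LinearMap.range (T u) := ⟨Pi.single i 1, hTsingle u i⟩
  have hui : (⟨u i, hmem⟩ : LinearMap.range (T u)) =
      ⟨T u (Pi.single i 1), LinearMap.mem_range_self _ _⟩ := by
    exact Subtype.ext (hTsingle u i).symm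
  calc s i = T s (Pi.single i 1) := (hTsingle s i).symm
    _ = φ ⟨T u (Pi.single i 1), LinearMap.mem_range_self _ _⟩ := (hφ _).symm
    _ = F ⟨u i, hmem⟩ := by rw [hui]; rfl
    _ = F.extend (u i) := (F.extend_apply ⟨u i, hmem⟩).symm
    _ = (G.toLinearIsometryEquiv rfl) (u i) := rfl

/-- The second moment over `O(n)` determines a δ-function with radially collision-free
support uniquely up to an orthogonal transformation. -/
theorem secondMoment_determines_of_radiallyCollisionFree {n k : ℕ}
    (t : Fin k → EuclideanSpace ℝ (Fin n))
    (hrad : ∀ i j : Fin k, ‖t i‖ = ‖t j‖ → i = j)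
    (s : Fin k → EuclideanSpace ℝ (Fin n)) (hs : Function.Injective s)
    (hsm : SameSecondMoment s t) :
    ∃ (g : EuclideanSpace ℝ (Fin n) ≃ₗᵢ[ℝ] EuclideanSpace ℝ (Fin n))
      (σ : Equiv.Perm (Fin k)), ∀ i : Fin k, s i = g (t (σ i)) := by
  classical
  obtain ⟨hnd, hpd⟩ := hsm
  -- norms of s are pairwise distinct
  have hndupt : (normData t).Nodup :=
    Multiset.Nodup.map (fun a b hab => hrad a b hab) Finset.univ.nodup
  have hndups : (normData s).Nodup := hnd ▸ hndupt
  have hsinj : ∀ i j : Fin k, ‖s i‖ = ‖s j‖ → i = j := by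
    intro i j hij
    have hndups' : (Finset.univ.val.map fun i => ‖s i‖).Nodup := hndups
    exact Multiset.inj_on_of_nodup_map hndups' i (Finset.mem_univ_val i)
      j (Finset.mem_univ_val j) hij
  -- construct the permutation
  have hex : ∀ i : Fin k, ∃ j : Fin k, ‖t j‖ = ‖s i‖ := by
    intro i
    have : ‖s i‖ ∈ normData t := by
      rw [← hnd]
      exact Multiset.mem_map_of_mem _ (Finset.mem_univ_val i)
    obtain ⟨j, _, hj⟩ := Multiset.mem_map.mp this
    exact ⟨j, hj⟩
  let m : Fin k → Fin k := fun i => (hex i).choose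
  have hm : ∀ i, ‖t (m i)‖ = ‖s i‖ := fun i => (hex i).choose_spec
  have hminj : Function.Injective m := by
    intro i j hij
    exact hsinj i j (by rw [← hm i, ← hm j, hij])
  let σ : Equiv.Perm (Fin k) := Equiv.ofBijective m (Finite.injective_iff_bijective.mp hminj)
  have hσ : ∀ i, ‖s i‖ = ‖t (σ i)‖ := fun i => (hm i).symm
  -- Gram matrices coincide
  have hlt : ∀ i j : Fin k, i < j → ⟪s i, s j⟫ = ⟪t (σ i), t (σ j)⟫ := by
    intro i j hij
    have hmemp : (Sym2.mk ‖s i‖ ‖s j‖, ⟪s i, s j⟫) ∈ pairData t := by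
      rw [← hpd]; exact ⟨i, j, hij, rfl⟩
    obtain ⟨a, b, _, hab⟩ := hmemp
    have h1 : Sym2.mk ‖s i‖ ‖s j‖ = Sym2.mk ‖t a‖ ‖t b‖ := congrArg Prod.fst hab
    have h2 : ⟪s i, s j⟫ = ⟪t a, t b⟫ := congrArg Prod.snd hab
    rw [Sym2.eq_iff] at h1
    rcases h1 with ⟨hia, hjb⟩ | ⟨hib, hja⟩
    · have ha : σ i = a := hrad _ _ ((hσ i).symm.trans hia)
      have hb : σ j = b := hrad _ _ ((hσ j).symm.trans hjb)
      rw [ha, hb]; exact h2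
    · have hbσ : σ i = b := hrad _ _ ((hσ i).symm.trans hib)
      have haσ : σ j = a := hrad _ _ ((hσ j).symm.trans hja)
      rw [hbσ, haσ]; exact h2.trans (real_inner_comm _ _)
  have hG : ∀ i j : Fin k, ⟪s i, s j⟫ = ⟪t (σ i), t (σ j)⟫ := by
    intro i j
    rcases lt_trichotomy i j with hij | hij | hij
    · exact hlt i j hij
    · subst hij
      rw [real_inner_self_eq_norm_sq, real_inner_self_eq_norm_sq, hσ i]
    · rw [real_inner_comm, hlt j i hij, real_inner_comm]
  obtain ⟨g, hg⟩ := exists_isometry_of_gram (fun i => t (σ i)) s hG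
  exact ⟨g, σ, hg⟩
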